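/- Fix ν ∈ ℕ₀ and m ∈ ℕ₀. Define h_{ν}(t) = 2^{ν+1/2} (ν!/√((2ν)!)) (t^ν/ν!) e^{−t} 1_{[0,∞)}(t) and φ_m(t) = √2 L_m(2t) e^{−t} 1_{[0,∞)}(t). Then for every t ∈ ℝ, ∫_ℝ h_{ν}(t−τ) φ_m(τ) dτ = (ν!/√((2ν)!)) · (m!/(m+ν+1)!) · (2t)^{ν+1} L_m^{(ν+1)}(2t) e^{−t} 1_{[0,∞)}(t). -/

import Mathlib

/-!
On `[0, ∞)` both factors are polynomials times `e^{-s}`, so for `t ≥ 0` the integrand is supported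
on `[0, t]`, where the exponentials combine to `e^{-t}` and `√2 · 2^{ν+1/2} = 2^{ν+1}`. Expanding
`L_m(2τ)` termwise, each term is a Beta integral
`∫₀ᵗ τ^k (t-τ)^ν dτ = k! ν! / (k+ν+1)! · t^{k+ν+1}`, and the identity
`C(m,k) (m+ν+1)! k! = m! C(m+ν+1, m-k) (k+ν+1)!` turns the resulting coefficients into those of
`L_m^{(ν+1)}`. For `t < 0` the supports are disjoint.
-/

open Real Finset MeasureTheory

/-- The `m`-th Laguerre polynomial `L_m(x) = ∑_{k=0}^m C(m,k)(−1)^k x^k/k!`. -/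
noncomputable def lagPoly (m : ℕ) (x : ℝ) : ℝ :=
  ∑ k ∈ Finset.range (m + 1), (Nat.choose m k : ℝ) * (-1) ^ k / (Nat.factorial k : ℝ) * x ^ k

/-- The associated Laguerre polynomial `L_m^{(η)}(x) = ∑_{k=0}^m C(m+η, m−k)(−1)^k x^k/k!`. -/
noncomputable def assocLagPoly (m η : ℕ) (x : ℝ) : ℝ :=
  ∑ k ∈ Finset.range (m + 1),
    (Nat.choose (m + η) (m - k) : ℝ) * (-1) ^ k / (Nat.factorial k : ℝ) * x ^ k

/-- The square-root filter `h_ν(t) = 2^{ν+1/2}(ν!/√((2ν)!))(t^ν/ν!)e^{−t}1_{[0,∞)}(t)`. -/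
noncomputable def hMatern (ν : ℕ) (t : ℝ) : ℝ :=
  Set.indicator (Set.Ici (0 : ℝ))
    (fun s =>
      (2 : ℝ) ^ ((ν : ℝ) + 1 / 2) * ((Nat.factorial ν : ℝ) / Real.sqrt (Nat.factorial (2 * ν))) *
        (s ^ ν / (Nat.factorial ν : ℝ)) * Real.exp (-s)) t

/-- The Laguerre function `φ_m(t) = √2 L_m(2t) e^{−t} 1_{[0,∞)}(t)` for `m ∈ ℕ₀`. -/
noncomputable def lagFunPos (m : ℕ) (t : ℝ) : ℝ :=
  Set.indicator (Set.Ici (0 : ℝ))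
    (fun s => Real.sqrt 2 * lagPoly m (2 * s) * Real.exp (-s)) t

open scoped Nat

theorem integral_pow_mul_sub_pow (t : ℝ) (k ν : ℕ) :
    ∫ τ in (0 : ℝ)..t, τ ^ k * (t - τ) ^ ν = (k ! * ν ! : ℝ) / (k + ν + 1)! * t ^ (k + ν + 1) := by
  induction k generalizing ν with
  | zero =>
    simp only [pow_zero, one_mul, intervalIntegral.integral_comp_sub_left (· ^ ν) t, integral_pow,
      zero_add, Nat.factorial_succ]
    push_cast
    field_simp
    ring
  | succ k ih =>
    have hν : (ν + 1 : ℝ) ≠ 0 := by positivity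
    have hu : ∀ x ∈ Set.uIcc 0 t, HasDerivAt (· ^ (k + 1)) ((k + 1 : ℝ) * x ^ k) x := fun x _ => by
      simpa using hasDerivAt_pow (k + 1) x
    have hv : ∀ x ∈ Set.uIcc 0 t,
        HasDerivAt (fun τ => -(t - τ) ^ (ν + 1) / (ν + 1)) ((t - x) ^ ν) x := fun x _ => by
      refine ((((hasDerivAt_id' x).const_sub t).pow (ν + 1)).neg.div_const _).congr_deriv ?_
      push_cast
      field_simp
    have h_rest : ∫ τ in (0 : ℝ)..t, (k + 1 : ℝ) * τ ^ k * (-(t - τ) ^ (ν + 1) / (ν + 1))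
        = -((k + 1) / (ν + 1)) * ∫ τ in (0 : ℝ)..t, τ ^ k * (t - τ) ^ (ν + 1) := by
      rw [← intervalIntegral.integral_const_mul]
      congr 1; ext τ; ring
    -- the boundary terms of the integration by parts vanish at `τ = 0` and `τ = t`
    rw [intervalIntegral.integral_mul_deriv_eq_deriv_mul hu hv
        (Continuous.intervalIntegrable (by fun_prop) _ _)
        (Continuous.intervalIntegrable (by fun_prop) _ _),
      h_rest, ih, show k + (ν + 1) + 1 = k + 1 + ν + 1 by ring]
    simp only [sub_self, Nat.factorial_succ]
    push_cast
    field_simp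
    ring

theorem choose_mul_factorial_eq (m ν k : ℕ) (hk : k ≤ m) :
    m.choose k * (m + ν + 1)! * k ! = m ! * (m + ν + 1).choose (m - k) * (k + ν + 1)! := by
  apply Nat.eq_of_mul_eq_mul_right (Nat.factorial_pos (m - k))
  have h := Nat.choose_mul_factorial_mul_factorial (show m - k ≤ m + ν + 1 by omega)
  rw [show m + ν + 1 - (m - k) = k + ν + 1 by omega] at h
  calc m.choose k * (m + ν + 1)! * k ! * (m - k)!
      = m.choose k * k ! * (m - k)! * (m + ν + 1)! := by ring
    _ = m ! * ((m + ν + 1).choose (m - k) * (m - k)! * (k + ν + 1)!) := by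
      rw [Nat.choose_mul_factorial_mul_factorial hk, h]
    _ = _ := by ring

theorem integral_sub_pow_mul_lagPoly (ν m : ℕ) (t : ℝ) :
    2 ^ (ν + 1) * ∫ τ in (0 : ℝ)..t, (t - τ) ^ ν * lagPoly m (2 * τ)
      = ν ! * (m ! / (m + ν + 1)!) * (2 * t) ^ (ν + 1) * assocLagPoly m (ν + 1) (2 * t) := by
  simp only [lagPoly, assocLagPoly, Finset.mul_sum]
  rw [intervalIntegral.integral_finsetSum fun k _ => Continuous.intervalIntegrable (by fun_prop) _ _]
  simp only [Finset.mul_sum]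
  refine Finset.sum_congr rfl fun k hk => ?_
  have hcomb : (m.choose k : ℝ) * (m + ν + 1)! * k !
      = m ! * (m + ν + 1).choose (m - k) * (k + ν + 1)! := by
    exact_mod_cast choose_mul_factorial_eq m ν k (Nat.lt_succ_iff.mp (Finset.mem_range.mp hk))
  have h_term : ∫ τ in (0 : ℝ)..t, (t - τ) ^ ν * ((m.choose k : ℝ) * (-1) ^ k / k ! * (2 * τ) ^ k)
      = (m.choose k : ℝ) * (-1) ^ k / k ! * 2 ^ k * ∫ τ in (0 : ℝ)..t, τ ^ k * (t - τ) ^ ν := by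
    rw [← intervalIntegral.integral_const_mul]
    congr 1; ext τ; ring
  rw [h_term, integral_pow_mul_sub_pow, show m + (ν + 1) = m + ν + 1 by ring]
  have : ((k + ν + 1)! : ℝ) ≠ 0 := by positivity
  have : ((m + ν + 1)! : ℝ) ≠ 0 := by positivity
  field_simp
  linear_combination (2 ^ (ν + 1) * 2 ^ k * t ^ (k + ν + 1) : ℝ) * hcomb

theorem rpow_add_half_mul_sqrt {x : ℝ} (hx : 0 < x) (n : ℕ) :
    x ^ ((n : ℝ) + 1 / 2) * √x = x ^ (n + 1) := by
  rw [sqrt_eq_rpow, ← rpow_add hx, ← rpow_natCast]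
  push_cast
  ring_nf

theorem hMatern_sub_mul_lagFunPos (ν m : ℕ) (t τ : ℝ) :
    hMatern ν (t - τ) * lagFunPos m τ = (Set.Icc 0 t).indicator (fun τ =>
      2 ^ (ν + 1) / √(2 * ν)! * exp (-t) * ((t - τ) ^ ν * lagPoly m (2 * τ))) τ := by
  by_cases hτ : τ ∈ Set.Icc 0 t
  · rw [Set.indicator_of_mem hτ, hMatern, lagFunPos,
      Set.indicator_of_mem (Set.mem_Ici.2 (sub_nonneg.2 hτ.2)),
      Set.indicator_of_mem (Set.mem_Ici.2 hτ.1),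
      show exp (-t) = exp (-(t - τ)) * exp (-τ) by rw [← exp_add]; ring_nf,
      ← rpow_add_half_mul_sqrt two_pos]
    field_simp
  · rw [Set.indicator_of_notMem hτ]
    rcases not_and_or.1 hτ with h0 | ht
    · simp [lagFunPos, h0]
    · simp [hMatern, ht]

/-- Convolution identity: `(h_ν ∗ φ_m)(t)` equals the Matérn–Laguerre function `ψ⁺_{m,ν}(t)`. -/
theorem hMatern_conv_lagFunPos (ν m : ℕ) (t : ℝ) :
    ∫ τ : ℝ, hMatern ν (t - τ) * lagFunPos m τ =
      Set.indicator (Set.Ici (0 : ℝ))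
        (fun s =>
          ((Nat.factorial ν : ℝ) / Real.sqrt (Nat.factorial (2 * ν))) *
            ((Nat.factorial m : ℝ) / (Nat.factorial (m + ν + 1) : ℝ)) *
            (2 * s) ^ (ν + 1) * assocLagPoly m (ν + 1) (2 * s) * Real.exp (-s)) t := by
  simp only [hMatern_sub_mul_lagFunPos, integral_indicator measurableSet_Icc]
  by_cases ht : 0 ≤ t
  · rw [Set.indicator_of_mem (Set.mem_Ici.2 ht), integral_Icc_eq_integral_Ioc,
      ← intervalIntegral.integral_of_le ht, intervalIntegral.integral_const_mul]
    linear_combination (exp (-t) / √(2 * ν)!) * integral_sub_pow_mul_lagPoly ν m t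
  · rw [Set.Icc_eq_empty ht, Measure.restrict_empty, integral_zero_measure,
      Set.indicator_of_notMem (by simpa using ht)]
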